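/- arXiv:2002.08537 — 2 statements merged into one kernel-verified Lean document; each statement's English description precedes it below -/
import Mathlib

section
/- Let (g^j)_{j≥1} be vectors in ℝ^d, 0 ≤ β < 1, and define m^k := (1−β) ∑_{j=1}^{k−1} β^{k−1−j} g^j and v^k := v^{k−1} + ‖g^k‖² with v^0 = 0 and δ > 0. Then for every K ≥ 1, ∑_{k=1}^K ‖m^k‖²/(v^k + δ) ≤ ∑_{j=1}^{K−1} ‖g^j‖²/(v^j + δ). -/
open Finset
set_option maxHeartbeats 1600000

lemma geom_range_le (β : ℝ) (hβ0 : 0 ≤ β) (hβ1 : β < 1) (n : ℕ) :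
    (1 - β) * ∑ i ∈ Finset.range n, β ^ i ≤ 1 := by
  have h := geom_sum_mul β n
  have h2 : (0:ℝ) ≤ β ^ n := pow_nonneg hβ0 n
  nlinarith [h, h2]

lemma geom_Ico_le (β : ℝ) (hβ0 : 0 ≤ β) (hβ1 : β < 1) (a b : ℕ) :
    (1 - β) * ∑ k ∈ Finset.Ico a b, β ^ (k - a) ≤ 1 := by
  rw [Finset.sum_Ico_eq_sum_range]
  simp only [Nat.add_sub_cancel_left]
  exact geom_range_le β hβ0 hβ1 _

lemma geom_Icc_le (β : ℝ) (hβ0 : 0 ≤ β) (hβ1 : β < 1) (n : ℕ) :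
    (1 - β) * ∑ j ∈ Finset.Icc 1 n, β ^ (n - j) ≤ 1 := by
  have : ∑ j ∈ Finset.Icc 1 n, β ^ (n - j) = ∑ i ∈ Finset.range n, β ^ i := by
    rw [← Finset.Ico_add_one_right_eq_Icc, Finset.sum_Ico_eq_sum_range]
    rw [← Finset.sum_range_reflect (fun i => β ^ i) n]
    apply Finset.sum_congr rfl
    intro i hi
    simp only [Finset.mem_range] at hi
    congr 1
    omega
  rw [this]
  exact geom_range_le β hβ0 hβ1 n

theorem momentum_sum_le {d : ℕ} (β δ : ℝ) (hβ0 : 0 ≤ β) (hβ1 : β < 1) (hδ : 0 < δ)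
    (g : ℕ → EuclideanSpace ℝ (Fin d))
    (m : ℕ → EuclideanSpace ℝ (Fin d))
    (hm : ∀ k, m k = (1 - β) • ∑ j ∈ Finset.Icc 1 (k - 1), β ^ (k - 1 - j) • g j)
    (v : ℕ → ℝ) (hv : ∀ k, v k = ∑ j ∈ Finset.Icc 1 k, ‖g j‖ ^ 2)
    (K : ℕ) (hK : 1 ≤ K) :
    ∑ k ∈ Finset.Icc 1 K, ‖m k‖ ^ 2 / (v k + δ)
      ≤ ∑ j ∈ Finset.Icc 1 (K - 1), ‖g j‖ ^ 2 / (v j + δ) := by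
  have hβ' : (0:ℝ) < 1 - β := by linarith
  have hvnn : ∀ k, 0 ≤ v k := by
    intro k; rw [hv k]; positivity
  have hvpos : ∀ k, 0 < v k + δ := fun k => by have := hvnn k; linarith
  have hvmono : ∀ {j k : ℕ}, j ≤ k → v j ≤ v k := by
    intro j k hjk
    rw [hv j, hv k]
    apply Finset.sum_le_sum_of_subset_of_nonneg
    · exact Finset.Icc_subset_Icc_right hjk
    · intro i _ _; positivity
  set a : ℕ → ℝ := fun j => ‖g j‖ ^ 2 / (v j + δ) with ha
  have hann : ∀ j, 0 ≤ a j := fun j => by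
    have := hvpos j; positivity
  -- Step A: pointwise bound
  have stepA : ∀ k ∈ Finset.Icc 1 K,
      ‖m k‖ ^ 2 / (v k + δ) ≤ (1 - β) * ∑ j ∈ Finset.Icc 1 (k-1), β ^ (k-1-j) * a j := by
    intro k hk
    set S := Finset.Icc 1 (k-1) with hS
    set w : ℕ → ℝ := fun j => β ^ (k-1-j) with hw
    have hwnn : ∀ j, 0 ≤ w j := fun j => pow_nonneg hβ0 _
    have h1 : ‖m k‖ ≤ (1 - β) * ∑ j ∈ S, w j * ‖g j‖ := by
      rw [hm k, norm_smul, Real.norm_eq_abs, abs_of_pos hβ']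
      gcongr
      calc ‖∑ j ∈ S, β ^ (k-1-j) • g j‖ ≤ ∑ j ∈ S, ‖β ^ (k-1-j) • g j‖ := norm_sum_le _ _
        _ = ∑ j ∈ S, w j * ‖g j‖ := by
            apply Finset.sum_congr rfl
            intro j _
            rw [norm_smul, Real.norm_eq_abs, abs_of_nonneg (hwnn j)]
    have hcs : (∑ j ∈ S, w j * ‖g j‖) ^ 2 ≤ (∑ j ∈ S, w j) * ∑ j ∈ S, w j * ‖g j‖ ^ 2 := by
      have hmain := Finset.sum_mul_sq_le_sq_mul_sq S (fun j => Real.sqrt (w j))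
        (fun j => Real.sqrt (w j) * ‖g j‖)
      calc (∑ j ∈ S, w j * ‖g j‖) ^ 2
          = (∑ j ∈ S, Real.sqrt (w j) * (Real.sqrt (w j) * ‖g j‖)) ^ 2 := by
            congr 1
            apply Finset.sum_congr rfl
            intro j _
            rw [← mul_assoc, Real.mul_self_sqrt (hwnn j)]
        _ ≤ (∑ j ∈ S, Real.sqrt (w j) ^ 2) * ∑ j ∈ S, (Real.sqrt (w j) * ‖g j‖) ^ 2 := hmain
        _ = (∑ j ∈ S, w j) * ∑ j ∈ S, w j * ‖g j‖ ^ 2 := by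
            congr 1
            · exact Finset.sum_congr rfl fun j _ => Real.sq_sqrt (hwnn j)
            · apply Finset.sum_congr rfl
              intro j _
              rw [mul_pow, Real.sq_sqrt (hwnn j)]
    have hsw : (1 - β) * ∑ j ∈ S, w j ≤ 1 := geom_Icc_le β hβ0 hβ1 (k-1)
    have h2 : ‖m k‖ ^ 2 ≤ (1 - β) * ∑ j ∈ S, w j * ‖g j‖ ^ 2 := by
      have hmnn : 0 ≤ ‖m k‖ := norm_nonneg _
      calc ‖m k‖ ^ 2 ≤ ((1 - β) * ∑ j ∈ S, w j * ‖g j‖) ^ 2 :=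
            pow_le_pow_left₀ hmnn h1 2
        _ = (1 - β) ^ 2 * (∑ j ∈ S, w j * ‖g j‖) ^ 2 := by ring
        _ ≤ (1 - β) ^ 2 * ((∑ j ∈ S, w j) * ∑ j ∈ S, w j * ‖g j‖ ^ 2) :=
            mul_le_mul_of_nonneg_left hcs (by positivity)
        _ = ((1 - β) * ∑ j ∈ S, w j) * ((1 - β) * ∑ j ∈ S, w j * ‖g j‖ ^ 2) := by ring
        _ ≤ 1 * ((1 - β) * ∑ j ∈ S, w j * ‖g j‖ ^ 2) := by
            have hTnn : 0 ≤ ∑ j ∈ S, w j * ‖g j‖ ^ 2 :=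
              Finset.sum_nonneg fun j _ => mul_nonneg (hwnn j) (sq_nonneg _)
            exact mul_le_mul_of_nonneg_right hsw (mul_nonneg hβ'.le hTnn)
        _ = (1 - β) * ∑ j ∈ S, w j * ‖g j‖ ^ 2 := one_mul _
    calc ‖m k‖ ^ 2 / (v k + δ) ≤ ((1 - β) * ∑ j ∈ S, w j * ‖g j‖ ^ 2) / (v k + δ) := by
          have := hvpos k; gcongr
      _ = (1 - β) * ∑ j ∈ S, (w j * (‖g j‖ ^ 2 / (v k + δ))) := by
          rw [mul_div_assoc, Finset.sum_div]
          congr 1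
          exact Finset.sum_congr rfl fun j _ => by rw [mul_div_assoc]
      _ ≤ (1 - β) * ∑ j ∈ S, β ^ (k-1-j) * a j := by
          apply mul_le_mul_of_nonneg_left _ hβ'.le
          apply Finset.sum_le_sum
          intro j hj
          have hjk : j ≤ k := by
            simp only [hS, Finset.mem_Icc] at hj; omega
          have hvj := hvpos j
          have hvm := hvmono hjk
          have hle : v j + δ ≤ v k + δ := by linarith
          apply mul_le_mul_of_nonneg_left _ (hwnn j)
          have haj : a j = ‖g j‖ ^ 2 / (v j + δ) := rfl
          rw [haj]
          gcongr
  -- Step B: sum up and swap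
  calc ∑ k ∈ Finset.Icc 1 K, ‖m k‖ ^ 2 / (v k + δ)
      ≤ ∑ k ∈ Finset.Icc 1 K, (1 - β) * ∑ j ∈ Finset.Icc 1 (k-1), β ^ (k-1-j) * a j :=
        Finset.sum_le_sum stepA
    _ = (1 - β) * ∑ k ∈ Finset.Ico 1 (K+1), ∑ j ∈ Finset.Ico 1 k, β ^ (k-1-j) * a j := by
        rw [← Finset.mul_sum, Finset.Ico_add_one_right_eq_Icc]
        congr 1
    _ = (1 - β) * ∑ j ∈ Finset.Ico 1 (K+1), ∑ k ∈ Finset.Ico (j+1) (K+1), β ^ (k-1-j) * a j := by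
        rw [← Finset.sum_Ico_Ico_comm' 1 (K+1) (fun j k => β ^ (k-1-j) * a j)]
    _ ≤ ∑ j ∈ Finset.Icc 1 (K - 1), a j := by
        rw [Finset.mul_sum]
        have hterm : ∀ j ∈ Finset.Ico 1 (K+1),
            (1 - β) * ∑ k ∈ Finset.Ico (j+1) (K+1), β ^ (k-1-j) * a j ≤
              (if j ≤ K - 1 then a j else 0) := by
          intro j hj
          have hje : ∑ k ∈ Finset.Ico (j+1) (K+1), β ^ (k-1-j) * a j
              = (∑ k ∈ Finset.Ico (j+1) (K+1), β ^ (k-(j+1))) * a j := by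
            rw [Finset.sum_mul]
            apply Finset.sum_congr rfl
            intro k hk
            have : k - 1 - j = k - (j+1) := by omega
            rw [this]
          rw [hje]
          by_cases hcase : j ≤ K - 1
          · simp only [hcase, if_true]
            have hg := geom_Ico_le β hβ0 hβ1 (j+1) (K+1)
            calc (1 - β) * ((∑ k ∈ Finset.Ico (j+1) (K+1), β ^ (k-(j+1))) * a j)
                = ((1 - β) * ∑ k ∈ Finset.Ico (j+1) (K+1), β ^ (k-(j+1))) * a j := by ring
              _ ≤ 1 * a j := mul_le_mul_of_nonneg_right hg (hann j)
              _ = a j := one_mul _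
          · simp only [hcase, if_false]
            have hjK : j = K := by
              simp only [Finset.mem_Ico] at hj; omega
            have : Finset.Ico (j+1) (K+1) = ∅ := by
              rw [hjK]; exact Finset.Ico_self _
            rw [this]
            simp
        calc ∑ j ∈ Finset.Ico 1 (K+1),
              (1 - β) * ∑ k ∈ Finset.Ico (j+1) (K+1), β ^ (k-1-j) * a j
            ≤ ∑ j ∈ Finset.Ico 1 (K+1), (if j ≤ K - 1 then a j else 0) :=
              Finset.sum_le_sum hterm
          _ = ∑ j ∈ Finset.Icc 1 (K-1), a j := by
              rw [← Finset.sum_filter]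
              congr 1
              ext x
              simp only [Finset.mem_filter, Finset.mem_Ico, Finset.mem_Icc]
              omega
end

section
/- Let (g^j)_{j=1}^{K} be vectors in ℝ^d with ‖g^j‖ ≤ G for all j, let v^k := ∑_{j=1}^k ‖g^j‖², δ > 0, and let m^k := (1−β) ∑_{j=1}^{k−1} β^{k−1−j} g^j for 0 ≤ β < 1. Then ∑_{k=1}^K ‖m^k‖²/(v^k + δ) ≤ ln((δ + (K−1)G²)/δ). -/
/-!
Each $m^k$ is a combination of $g^1, \dots, g^{k-1}$ with nonnegative weights
$(1-\beta)\beta^{k-1-j}$ whose row sums and column sums are at most $1$. Jensen's inequality for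
$\|\cdot\|^2$ and the monotonicity of $v^k$ therefore bound the left-hand side by
$\sum_{j<K} \|g^j\|^2/(v^j + \delta)$, and this sum telescopes against the logarithm through
$a/(b+a) \le \log((b+a)/b)$.
-/

open Finset

theorem div_add_le_log_div {a b : ℝ} (ha : 0 ≤ a) (hb : 0 < b) :
    a / (b + a) ≤ Real.log ((b + a) / b) := by
  have hba : 0 < b + a := by linarith
  calc a / (b + a) = 1 - ((b + a) / b)⁻¹ := by field_simp; ring
    _ ≤ Real.log ((b + a) / b) := Real.one_sub_inv_le_log_of_pos (by positivity)

theorem sum_div_partialSum_add_le_log {a : ℕ → ℝ} (ha : ∀ j, 0 ≤ a j) {δ : ℝ} (hδ : 0 < δ)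
    (n : ℕ) :
    ∑ j ∈ Icc 1 n, a j / (∑ i ∈ Icc 1 j, a i + δ)
      ≤ Real.log ((∑ i ∈ Icc 1 n, a i + δ) / δ) := by
  induction n with
  | zero => simp
  | succ n ih =>
    rw [sum_Icc_succ_top (by omega), sum_Icc_succ_top (by omega)]
    set S := ∑ i ∈ Icc 1 n, a i
    have hS : 0 < S + δ := by linarith [sum_nonneg fun i (_ : i ∈ Icc 1 n) => ha i]
    have hSa : 0 < S + δ + a (n + 1) := by linarith [ha (n + 1)]
    calc _ ≤ Real.log ((S + δ) / δ) + Real.log ((S + δ + a (n + 1)) / (S + δ)) := by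
          rw [add_right_comm S (a (n + 1)) δ]
          exact add_le_add ih (div_add_le_log_div (ha (n + 1)) hS)
      _ = Real.log ((S + a (n + 1) + δ) / δ) := by
          rw [← Real.log_mul (div_pos hS hδ).ne' (div_pos hSa hS).ne', add_right_comm S δ]
          congr 1
          field_simp

theorem norm_sq_sum_smul_le {ι E : Type*} [SeminormedAddCommGroup E] [NormedSpace ℝ E]
    {s : Finset ι} {w : ι → ℝ} (hw : ∀ i ∈ s, 0 ≤ w i) (hw1 : ∑ i ∈ s, w i ≤ 1) (x : ι → E) :
    ‖∑ i ∈ s, w i • x i‖ ^ 2 ≤ ∑ i ∈ s, w i * ‖x i‖ ^ 2 := by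
  have hnorm : ‖∑ i ∈ s, w i • x i‖ ≤ ∑ i ∈ s, w i * ‖x i‖ := by
    refine (norm_sum_le _ _).trans_eq (sum_congr rfl fun i hi => ?_)
    rw [norm_smul, Real.norm_of_nonneg (hw i hi)]
  have hcs : (∑ i ∈ s, w i * ‖x i‖) ^ 2 ≤ (∑ i ∈ s, w i) * ∑ i ∈ s, w i * ‖x i‖ ^ 2 :=
    sum_sq_le_sum_mul_sum_of_sq_le_mul s hw (fun i hi => by have := hw i hi; positivity)
      fun i _ => le_of_eq (by ring)
  have hsq : 0 ≤ ∑ i ∈ s, w i * ‖x i‖ ^ 2 :=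
    sum_nonneg fun i hi => by have := hw i hi; positivity
  calc ‖∑ i ∈ s, w i • x i‖ ^ 2 ≤ (∑ i ∈ s, w i * ‖x i‖) ^ 2 := by gcongr
    _ ≤ (∑ i ∈ s, w i) * ∑ i ∈ s, w i * ‖x i‖ ^ 2 := hcs
    _ ≤ ∑ i ∈ s, w i * ‖x i‖ ^ 2 := mul_le_of_le_one_left hsq hw1

theorem sum_norm_sq_lowerTriangular_div_le {E : Type*} [SeminormedAddCommGroup E]
    [NormedSpace ℝ E] {K : ℕ} {w : ℕ → ℕ → ℝ} (hw : ∀ k j, 0 ≤ w k j)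
    (hrow : ∀ k, ∑ j ∈ Icc 1 (k - 1), w k j ≤ 1) (hcol : ∀ j, ∑ k ∈ Icc (j + 1) K, w k j ≤ 1)
    {D : ℕ → ℝ} (hD : Monotone D) (hD0 : ∀ k, 0 < D k) (x : ℕ → E) :
    ∑ k ∈ Icc 1 K, ‖∑ j ∈ Icc 1 (k - 1), w k j • x j‖ ^ 2 / D k
      ≤ ∑ j ∈ Icc 1 (K - 1), ‖x j‖ ^ 2 / D j := by
  have hterm : ∀ k, ‖∑ j ∈ Icc 1 (k - 1), w k j • x j‖ ^ 2 / D k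
      ≤ ∑ j ∈ Icc 1 (k - 1), w k j * (‖x j‖ ^ 2 / D j) := fun k => by
    rw [div_le_iff₀ (hD0 k), sum_mul]
    refine (norm_sq_sum_smul_le (fun j _ => hw k j) (hrow k) x).trans (sum_le_sum fun j hj => ?_)
    have hjk : D j ≤ D k := hD (by simp only [mem_Icc] at hj; omega)
    rw [mul_assoc, div_mul_eq_mul_div]
    exact mul_le_mul_of_nonneg_left ((le_div_iff₀ (hD0 j)).2 (by gcongr)) (hw k j)
  calc _ ≤ ∑ k ∈ Icc 1 K, ∑ j ∈ Icc 1 (k - 1), w k j * (‖x j‖ ^ 2 / D j) :=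
        sum_le_sum fun k _ => hterm k
    _ = ∑ j ∈ Icc 1 (K - 1), (∑ k ∈ Icc (j + 1) K, w k j) * (‖x j‖ ^ 2 / D j) := by
        simp_rw [sum_mul]
        exact sum_comm' fun k j => by simp only [mem_Icc]; omega
    _ ≤ ∑ j ∈ Icc 1 (K - 1), ‖x j‖ ^ 2 / D j :=
        sum_le_sum fun j _ => mul_le_of_le_one_left (by have := hD0 j; positivity) (hcol j)

theorem one_sub_mul_geom_sum_le_one {β : ℝ} (hβ : 0 ≤ β) (n : ℕ) :
    (1 - β) * ∑ i ∈ range n, β ^ i ≤ 1 := by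
  rw [mul_neg_geom_sum]
  linarith [pow_nonneg hβ n]

theorem sum_Icc_pow_sub_eq_geom_sum (β : ℝ) (n : ℕ) :
    ∑ j ∈ Icc 1 n, β ^ (n - j) = ∑ i ∈ range n, β ^ i := by
  rw [← Ico_add_one_right_eq_Icc, sum_Ico_eq_sum_range, ← sum_range_reflect]
  exact sum_congr rfl fun i hi => by rw [mem_range] at hi; congr 1; omega

theorem sum_Icc_pow_sub_sub_eq_geom_sum (β : ℝ) (j K : ℕ) :
    ∑ k ∈ Icc (j + 1) K, β ^ (k - 1 - j) = ∑ i ∈ range (K - j), β ^ i := by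
  rw [← Ico_add_one_right_eq_Icc, sum_Ico_eq_sum_range]
  exact sum_congr (by congr 1; omega) fun i _ => by congr 1; omega

theorem momentum_log_bound_general {d : ℕ} (β δ G : ℝ) (hβ0 : 0 ≤ β) (hβ1 : β < 1) (hδ : 0 < δ)
    (K : ℕ) (hK : 1 ≤ K)
    (g : ℕ → EuclideanSpace ℝ (Fin d))
    (hg : ∀ j ∈ Finset.Icc 1 K, ‖g j‖ ≤ G)
    (v : ℕ → ℝ) (hv : ∀ k, v k = ∑ j ∈ Finset.Icc 1 k, ‖g j‖ ^ 2)
    (m : ℕ → EuclideanSpace ℝ (Fin d))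
    (hm : ∀ k, m k = (1 - β) • ∑ j ∈ Finset.Icc 1 (k - 1), β ^ (k - 1 - j) • g j) :
    ∑ k ∈ Finset.Icc 1 K, ‖m k‖ ^ 2 / (v k + δ)
      ≤ Real.log ((δ + ((K : ℝ) - 1) * G ^ 2) / δ) := by
  have hm' : ∀ k, m k = ∑ j ∈ Icc 1 (k - 1), ((1 - β) * β ^ (k - 1 - j)) • g j := fun k => by
    simp only [hm, smul_sum, smul_smul]
  have hv0 : ∀ k, 0 ≤ v k := fun k => by rw [hv]; positivity
  have hD : Monotone fun k => v k + δ := fun j k hjk => by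
    simp only [hv]
    gcongr
  have hvK : v (K - 1) ≤ ((K : ℝ) - 1) * G ^ 2 := by
    rw [hv]
    refine (sum_le_card_nsmul _ _ (G ^ 2) fun j hj => ?_).trans_eq ?_
    · simp only [mem_Icc] at hj
      exact pow_le_pow_left₀ (norm_nonneg _) (hg j (mem_Icc.2 ⟨hj.1, by omega⟩)) 2
    · rw [Nat.card_Icc, nsmul_eq_mul, Nat.add_sub_cancel, Nat.cast_pred hK]
  simp_rw [hm']
  calc _ ≤ ∑ j ∈ Icc 1 (K - 1), ‖g j‖ ^ 2 / (v j + δ) := by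
        refine sum_norm_sq_lowerTriangular_div_le
          (fun k j => mul_nonneg (by linarith) (pow_nonneg hβ0 _))
          (fun k => ?_) (fun j => ?_) hD (fun k => ?_) g
        · rw [← mul_sum, sum_Icc_pow_sub_eq_geom_sum]
          exact one_sub_mul_geom_sum_le_one hβ0 _
        · rw [← mul_sum, sum_Icc_pow_sub_sub_eq_geom_sum]
          exact one_sub_mul_geom_sum_le_one hβ0 _
        · linarith [hv0 k]
    _ ≤ Real.log ((v (K - 1) + δ) / δ) := by
        simp only [hv]
        exact sum_div_partialSum_add_le_log (fun j => by positivity) hδ _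
    _ ≤ Real.log ((δ + ((K : ℝ) - 1) * G ^ 2) / δ) := by
        have := hv0 (K - 1)
        rw [add_comm δ]
        gcongr

theorem momentum_log_bound {d : ℕ} (β δ G : ℝ) (hβ0 : 0 ≤ β) (hβ1 : β < 1) (hδ : 0 < δ)
    (hG : 0 ≤ G) (K : ℕ) (hK : 1 ≤ K)
    (g : ℕ → EuclideanSpace ℝ (Fin d))
    (hg : ∀ j ∈ Finset.Icc 1 K, ‖g j‖ ≤ G)
    (v : ℕ → ℝ) (hv : ∀ k, v k = ∑ j ∈ Finset.Icc 1 k, ‖g j‖ ^ 2)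
    (m : ℕ → EuclideanSpace ℝ (Fin d))
    (hm : ∀ k, m k = (1 - β) • ∑ j ∈ Finset.Icc 1 (k - 1), β ^ (k - 1 - j) • g j) :
    ∑ k ∈ Finset.Icc 1 K, ‖m k‖ ^ 2 / (v k + δ)
      ≤ Real.log ((δ + ((K : ℝ) - 1) * G ^ 2) / δ) :=
  momentum_log_bound_general β δ G hβ0 hβ1 hδ K hK g hg v hv m hm
end
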